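/- arXiv:2010.03981 — 4 statements merged into one kernel-verified Lean document; each statement's English description precedes it below -/
import Mathlib

section
/- A tree T on n vertices has at most two center edges; moreover, T has two distinct center edges e_1 and e_2 if and only if e_1 and e_2 share a common endpoint z with n_z(e_1) = n_z(e_2) = ⌈n/2⌉. -/
namespace TreeOrder

attribute [local instance] Classical.propDecidable

variable {V : Type*} {W : Type*}

/-- `side G u v` = number of vertices strictly closer to `u` than to `v`;
for an edge `uv` of a tree this is the order of the component of `T - uv` containing `u`. -/
noncomputable def side [Fintype V] (G : SimpleGraph V) (u v : V) : ℕ :=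
  (Finset.univ.filter fun w => G.dist w u < G.dist w v).card

/-- `mu G u v = min (n_u(e), n_v(e))` for the edge `e = uv`. -/
noncomputable def mu [Fintype V] (G : SimpleGraph V) (u v : V) : ℕ :=
  min (side G u v) (side G v u)

/-- `mu` as a function on unordered pairs. -/
noncomputable def muE [Fintype V] (G : SimpleGraph V) : Sym2 V → ℕ :=
  Sym2.lift ⟨fun u v => mu G u v, fun _ _ => min_comm _ _⟩

/-- `r G i` = number of edges `e` of `G` with `μ(e) = i`. -/
noncomputable def r [Fintype V] (G : SimpleGraph V) (i : ℕ) : ℕ :=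
  (Finset.univ.filter fun e : Sym2 V => e ∈ G.edgeSet ∧ muE G e = i).card

/-- `tailSum G n k = Σ_{i=k}^{⌊n/2⌋} r_i(G)`. -/
noncomputable def tailSum [Fintype V] (G : SimpleGraph V) (n k : ℕ) : ℕ :=
  ∑ i ∈ Finset.Icc k (n / 2), r G i

/-- The order `⪯` on trees with `n` vertices, via edge division vectors. -/
def Preceq [Fintype V] [Fintype W] (n : ℕ) (G : SimpleGraph V) (H : SimpleGraph W) : Prop :=
  ∀ k, 1 ≤ k → k ≤ n / 2 → tailSum G n k ≤ tailSum H n k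

/-- The strict order `≺`. -/
def Prec [Fintype V] [Fintype W] (n : ℕ) (G : SimpleGraph V) (H : SimpleGraph W) : Prop :=
  Preceq n G H ∧ ∃ k, 1 ≤ k ∧ k ≤ n / 2 ∧ tailSum G n k < tailSum H n k

/-- Equality of edge division vectors `r(G) = r(H)`. -/
def SameEdgeDivision [Fintype V] [Fintype W] (n : ℕ) (G : SimpleGraph V)
    (H : SimpleGraph W) : Prop :=
  ∀ i, 1 ≤ i → i ≤ n / 2 → r G i = r H i

/-- `u` is a centroidal vertex: `n_u(e) ≥ n/2` for every edge `e` incident to `u`. -/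
def IsCentroidal [Fintype V] (G : SimpleGraph V) (u : V) : Prop :=
  ∀ v, G.Adj u v → Fintype.card V ≤ 2 * side G u v

/-- `u` is a proper centroidal vertex: `n_u(e) > ⌈n/2⌉` for every edge `e` incident to `u`. -/
def IsProperCentroidal [Fintype V] (G : SimpleGraph V) (u : V) : Prop :=
  ∀ v, G.Adj u v → (Fintype.card V + 1) / 2 < side G u v

/-- The edge `uv` is a center edge: `μ(uv) = ⌊n/2⌋`. -/
def IsCenterEdge [Fintype V] (G : SimpleGraph V) (u v : V) : Prop :=
  G.Adj u v ∧ mu G u v = Fintype.card V / 2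

/-- degree of a vertex -/
noncomputable def deg [Fintype V] (G : SimpleGraph V) (v : V) : ℕ :=
  (Finset.univ.filter fun w => G.Adj v w).card

/-- The path `P_n` on `n` vertices. -/
def pathG (n : ℕ) : SimpleGraph (Fin n) :=
  SimpleGraph.fromRel fun x y => (x : ℕ) + 1 = y

/-- The star `S_n` on `n` vertices. -/
def starG (n : ℕ) : SimpleGraph (Fin n) :=
  SimpleGraph.fromRel fun x _ => (x : ℕ) = 0

/-- The double star path `CP_{n;a,b}` : a path on `n - a - b` vertices (at positions
`a, …, n - b - 1`) with `a` pendent vertices attached to its first vertex and `b`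
pendent vertices attached to its last vertex. -/
def doubleStar (n a b : ℕ) : SimpleGraph (Fin n) :=
  SimpleGraph.fromRel fun x y =>
    ((x : ℕ) < a ∧ (y : ℕ) = a) ∨
    (a ≤ (x : ℕ) ∧ (x : ℕ) + 1 = y ∧ (y : ℕ) < n - b) ∨
    ((x : ℕ) = n - b - 1 ∧ n - b ≤ (y : ℕ))

/-- `CP_{n,k}^s` : a path `v_1 ⋯ v_k` (at positions `0, …, k-1`) with all
`n - k` pendent vertices attached to `v_s` (position `s - 1`). -/
def cpOne (n k s : ℕ) : SimpleGraph (Fin n) :=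
  SimpleGraph.fromRel fun x y =>
    ((x : ℕ) + 1 = y ∧ (y : ℕ) < k) ∨ ((x : ℕ) = s - 1 ∧ k ≤ (y : ℕ))

/-- The caterpillar `CP(n; n_1, …, n_k)` : a path `v_1 ⋯ v_k` (at positions `0, …, k-1`),
where pendent vertex `j` (for `k ≤ j < n`) is attached to the path vertex at
position `f j` (so `n_i = |{j : f j = i - 1}|`). -/
def caterpillar (n k : ℕ) (f : ℕ → ℕ) : SimpleGraph (Fin n) :=
  SimpleGraph.fromRel fun x y =>
    ((x : ℕ) + 1 = y ∧ (y : ℕ) < k) ∨ (k ≤ (y : ℕ) ∧ (x : ℕ) = f y)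

/-- The balanced starlike tree `SP_{n,q}` : the center is vertex `0`, and vertex
`j ≥ 1` lies on branch `(j - 1) % q` at depth `(j - 1)/q + 1`; so the `q` branches are
paths whose orders pairwise differ by at most `1`. -/
def balancedStar (n q : ℕ) : SimpleGraph (Fin n) :=
  SimpleGraph.fromRel fun x y =>
    ((x : ℕ) = 0 ∧ 1 ≤ (y : ℕ) ∧ (y : ℕ) ≤ q) ∨ (1 ≤ (x : ℕ) ∧ (x : ℕ) + q = y)

/-- The edge-moving transformation of `G` w.r.t. the edge `uv`: contract `uv` to `u`
(moving all edges at `v` to `u`) and attach `v` to `u` as a pendent vertex. -/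
def edgeMove (G : SimpleGraph V) (u v : V) : SimpleGraph V :=
  SimpleGraph.fromRel fun x y =>
    (G.Adj x y ∧ x ≠ v ∧ y ≠ v) ∨ (x = u ∧ y = v) ∨ (x = u ∧ G.Adj v y ∧ y ≠ u)

/-! Orient two distinct edges of a tree towards each other, as `u → v` and `d → c`. The far
sides `branch G u v` and `branch G d c` are then disjoint and miss both `v` and `c`, so
`side G u v + side G d c + #{v, c} ≤ n`. For two center edges both sides are at least `⌊n/2⌋`,
which forces `v = c`, `n` odd and both near sides of order `⌈n/2⌉`. A third center edge would
share with the first one an endpoint whose side has order `⌈n/2⌉`, which can only be `z`, and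
three pairwise disjoint branches at `z` of order `⌊n/2⌋ ≥ 1` do not fit into `n = 2⌊n/2⌋ + 1` vertices. -/

open SimpleGraph Finset

theorem _root_.SimpleGraph.IsTree.length_eq_dist {G : SimpleGraph V} (hT : G.IsTree) {u v : V}
    {p : G.Walk u v} (hp : p.IsPath) : p.length = G.dist u v := by
  obtain ⟨q, hq, hlen⟩ := hT.connected.exists_path_of_dist u v
  rw [← hlen, Subtype.mk.inj ((hT.isAcyclic.subsingleton_path u v).elim ⟨p, hp⟩ ⟨q, hq⟩)]

theorem _root_.SimpleGraph.IsTree.dist_lt_of_mem_support {G : SimpleGraph V} (hT : G.IsTree)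
    {c d x t : V} (hdc : G.Adj d c) (hx : G.dist x d < G.dist x c) {p : G.Walk x d}
    (hp : p.IsPath) (ht : t ∈ p.support) : G.dist t d < G.dist t c := by
  have hc : c ∉ p.support := fun hc => by
    have := G.dist_le (p.takeUntil c hc)
    have := p.length_takeUntil_le_length hc
    have := hT.length_eq_dist hp
    omega
  have hq := (hp.dropUntil ht).concat
    (fun h => hc (p.support_dropUntil_subset_support ht h)) hdc
  have := hT.length_eq_dist hq
  have := hT.length_eq_dist (hp.dropUntil ht)
  rw [Walk.length_concat] at *
  omega

theorem _root_.SimpleGraph.IsTree.dist_eq_dist_add_one_add_dist {G : SimpleGraph V}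
    (hT : G.IsTree) {c d x y : V} (hdc : G.Adj d c) (hx : G.dist x d < G.dist x c)
    (hy : G.dist y c < G.dist y d) : G.dist x y = G.dist x d + 1 + G.dist c y := by
  obtain ⟨p, hp, hplen⟩ := hT.connected.exists_path_of_dist x d
  obtain ⟨q, hq, hqlen⟩ := hT.connected.exists_path_of_dist y c
  have hpath : (p.append (Walk.cons hdc q.reverse)).IsPath := by
    rw [Walk.isPath_def, Walk.support_append, Walk.support_cons, List.tail_cons,
      Walk.support_reverse]
    refine hp.support_nodup.append (List.nodup_reverse.mpr hq.support_nodup) fun t htp htq => ?_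
    have := hT.dist_lt_of_mem_support hdc hx hp htp
    have := hT.dist_lt_of_mem_support hdc.symm hy hq (List.mem_reverse.mp htq)
    omega
  rw [← hT.length_eq_dist hpath, Walk.length_append, Walk.length_cons, Walk.length_reverse,
    hplen, hqlen, dist_comm (u := y)]
  ring

section Branch

variable [Fintype V] {G : SimpleGraph V} {u v c d w z : V}

/-- The vertex set of the component of `T - uv` containing `u`, when `uv` is an edge of a tree. -/
noncomputable def branch (G : SimpleGraph V) (u v : V) : Finset V :=
  univ.filter fun w => G.dist w u < G.dist w v

theorem card_branch : #(branch G u v) = side G u v := rfl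

theorem mem_branch : w ∈ branch G u v ↔ G.dist w u < G.dist w v := by
  simp [branch]

theorem mem_branch_self (h : G.Adj u v) : u ∈ branch G u v := by
  rw [mem_branch, dist_self, dist_eq_one_iff_adj.mpr h]
  exact one_pos

theorem side_pos (h : G.Adj u v) : 0 < side G u v :=
  card_pos.mpr ⟨u, mem_branch_self h⟩

theorem compl_branch (hT : G.IsTree) (h : G.Adj u v) : (branch G u v)ᶜ = branch G v u := by
  ext w
  rw [mem_compl, mem_branch, mem_branch]
  rcases hT.dist_eq_dist_add_one_of_adj w h with h | h <;> omega

theorem mem_branch_of_notMem (hT : G.IsTree) (h : G.Adj u v) (hw : w ∉ branch G u v) :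
    w ∈ branch G v u := by
  rw [← compl_branch hT h]
  exact mem_compl.mpr hw

theorem side_add_side (hT : G.IsTree) (h : G.Adj u v) :
    side G u v + side G v u = Fintype.card V := by
  rw [← card_branch, ← card_branch, ← compl_branch hT h, card_add_card_compl]

theorem mem_branch_of_adj (hT : G.IsTree) (hcd : G.Adj c d) (huv : G.Adj u v)
    (hne : s(u, v) ≠ s(c, d)) (hu : u ∈ branch G c d) : v ∈ branch G c d := by
  by_contra hv
  rw [mem_branch] at hu
  have hv := mem_branch.mp (mem_branch_of_notMem hT hcd hv)
  have hvu := hT.dist_eq_dist_add_one_add_dist hcd.symm hv hu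
  rw [dist_comm, dist_eq_one_iff_adj.mpr huv] at hvu
  have hvd : v = d := hT.connected.dist_eq_zero_iff.mp (by omega)
  have hcu : c = u := hT.connected.dist_eq_zero_iff.mp (by omega)
  exact hne (by rw [hvd, hcu])

theorem disjoint_branch (hT : G.IsTree) (hcd : G.Adj c d) (hu : u ∈ branch G c d)
    (hv : v ∈ branch G c d) (hc : c ∈ branch G v u) : Disjoint (branch G u v) (branch G d c) := by
  rw [Finset.disjoint_left]
  intro x hxu hxd
  rw [mem_branch] at hu hv hc hxu hxd
  have := hT.dist_eq_dist_add_one_add_dist hcd.symm hxd hu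
  have := hT.dist_eq_dist_add_one_add_dist hcd.symm hxd hv
  rw [dist_comm (u := c) (v := u), dist_comm (u := c) (v := v)] at *
  omega

theorem side_add_side_add_card_pair_le (hT : G.IsTree) (hcd : G.Adj c d)
    (hu : u ∈ branch G c d) (hv : v ∈ branch G c d) (hc : c ∈ branch G v u) :
    side G u v + side G d c + #{v, c} ≤ Fintype.card V := by
  have hvc : Disjoint (branch G u v ∪ branch G d c) {v, c} := by
    rw [mem_branch] at hv hc
    simp only [disjoint_insert_right, disjoint_singleton_right, mem_union, mem_branch, dist_self]
    omega
  rw [← card_branch, ← card_branch, ← card_union_of_disjoint (disjoint_branch hT hcd hu hv hc),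
    ← card_union_of_disjoint hvc]
  exact card_le_univ _

theorem disjoint_branch_of_adj_of_adj (hT : G.IsTree) {a b : V} (ha : G.Adj z a)
    (hb : G.Adj z b) (hab : a ≠ b) : Disjoint (branch G a z) (branch G b z) := by
  refine disjoint_branch hT hb ?_ (mem_branch_self hb) (mem_branch_self ha)
  rw [mem_branch, dist_comm, dist_eq_one_iff_adj.mpr ha]
  rcases hT.dist_eq_dist_add_one_of_adj a hb with h | h
  · rw [dist_comm, dist_eq_one_iff_adj.mpr ha, right_eq_add,
      hT.connected.dist_eq_zero_iff] at h
    exact absurd h hab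
  · rw [h, dist_comm, dist_eq_one_iff_adj.mpr ha]
    exact one_lt_two

theorem sum_side_lt (hT : G.IsTree) {S : Finset V} (hS : ∀ a ∈ S, G.Adj z a) :
    ∑ a ∈ S, side G a z < Fintype.card V := by
  have hdisj : (S : Set V).PairwiseDisjoint (branch G · z) := fun a ha b hb hab =>
    disjoint_branch_of_adj_of_adj hT (hS a ha) (hS b hb) hab
  rw [← sum_congr rfl fun a _ => card_branch, ← card_biUnion hdisj]
  refine card_lt_univ_of_notMem (x := z) fun hz => ?_
  obtain ⟨a, -, hza⟩ := mem_biUnion.mp hz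
  simp [mem_branch] at hza

end Branch

section CenterEdge

variable [Fintype V] {G : SimpleGraph V} {u v c d z a : V}

noncomputable def centerEdges (G : SimpleGraph V) : Finset (Sym2 V) :=
  univ.filter fun e => e ∈ G.edgeSet ∧ muE G e = Fintype.card V / 2

theorem mk_mem_centerEdges : s(u, v) ∈ centerEdges G ↔ IsCenterEdge G u v := by
  simp only [centerEdges, mem_filter, mem_univ, true_and, mem_edgeSet]
  rfl

theorem isCenterEdge_comm : IsCenterEdge G u v ↔ IsCenterEdge G v u := by
  simp only [IsCenterEdge, mu, G.adj_comm, min_comm]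

theorem isCenterEdge_congr {u' v' : V} (h : s(u, v) = s(u', v')) :
    IsCenterEdge G u v ↔ IsCenterEdge G u' v' := by
  rcases Sym2.eq_iff.mp h with ⟨rfl, rfl⟩ | ⟨rfl, rfl⟩
  · rfl
  · exact isCenterEdge_comm

theorem le_side_of_isCenterEdge (h : IsCenterEdge G u v) :
    Fintype.card V / 2 ≤ side G u v ∧ Fintype.card V / 2 ≤ side G v u := by
  rw [← h.2]
  exact ⟨min_le_left _ _, min_le_right _ _⟩

theorem isCenterEdge_of_side_eq (hT : G.IsTree) (h : G.Adj z a)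
    (hs : side G z a = (Fintype.card V + 1) / 2) : IsCenterEdge G z a := by
  have := side_add_side hT h
  refine ⟨h, ?_⟩
  rw [mu, hs]
  omega

theorem eq_and_side_eq_of_isCenterEdge (hT : G.IsTree) (h1 : IsCenterEdge G u v)
    (h2 : IsCenterEdge G c d) (hu : u ∈ branch G c d) (hv : v ∈ branch G c d)
    (hc : c ∈ branch G v u) :
    v = c ∧ side G v u = (Fintype.card V + 1) / 2 ∧ side G c d = (Fintype.card V + 1) / 2 := by
  have hle := side_add_side_add_card_pair_le hT h2.1 hu hv hc
  obtain ⟨huv, -⟩ := le_side_of_isCenterEdge h1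
  obtain ⟨-, hdc⟩ := le_side_of_isCenterEdge h2
  have := side_add_side hT h1.1
  have := side_add_side hT h2.1
  have hvc : v = c := by
    by_contra hvc
    rw [card_pair hvc] at hle
    omega
  subst hvc
  rw [pair_eq_singleton, card_singleton] at hle
  exact ⟨rfl, by omega, by omega⟩

theorem exists_common_endpoint_of_isCenterEdge (hT : G.IsTree) (h1 : IsCenterEdge G u v)
    (h2 : IsCenterEdge G c d) (hne : s(u, v) ≠ s(c, d)) :
    ∃ z a b : V, s(u, v) = s(z, a) ∧ s(c, d) = s(z, b) ∧
      side G z a = (Fintype.card V + 1) / 2 ∧ side G z b = (Fintype.card V + 1) / 2 := by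
  wlog hu : u ∈ branch G c d generalizing c d
  · obtain ⟨z, a, b, e1, e2, hs⟩ := this (isCenterEdge_comm.mp h2) (fun h => hne (h.trans Sym2.eq_swap))
      (mem_branch_of_notMem hT h2.1 hu)
    exact ⟨z, a, b, e1, Sym2.eq_swap.trans e2, hs⟩
  have hv := mem_branch_of_adj hT h2.1 h1.1 hne hu
  wlog hc : c ∈ branch G v u generalizing u v
  · obtain ⟨z, a, b, e1, e2, hs⟩ := this (isCenterEdge_comm.mp h1) (fun h => hne (Sym2.eq_swap.trans h)) hv hu
      (mem_branch_of_notMem hT h1.1.symm hc)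
    exact ⟨z, a, b, Sym2.eq_swap.trans e1, e2, hs⟩
  obtain ⟨rfl, hvu, hcd⟩ := eq_and_side_eq_of_isCenterEdge hT h1 h2 hu hv hc
  exact ⟨v, u, d, Sym2.eq_swap, rfl, hvu, hcd⟩

theorem card_centerEdges_le_two (hT : G.IsTree) : #(centerEdges G) ≤ 2 := by
  by_contra! h
  obtain ⟨e₁, he₁, e₂, he₂, e₃, he₃, h12, h13, h23⟩ := two_lt_card.mp h
  induction e₁ using Sym2.ind with | h u₁ v₁ => ?_
  induction e₂ using Sym2.ind with | h u₂ v₂ => ?_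
  induction e₃ using Sym2.ind with | h u₃ v₃ => ?_
  rw [mk_mem_centerEdges] at he₁ he₂ he₃
  obtain ⟨z, a, b, e1, e2, hza, hzb⟩ := exists_common_endpoint_of_isCenterEdge hT he₁ he₂ h12
  obtain ⟨z', a', c, e1', e3, hza', hzc⟩ := exists_common_endpoint_of_isCenterEdge hT he₁ he₃ h13
  rw [e1, e2] at h12
  rw [e1, e3] at h13
  rw [e2, e3] at h23
  rw [isCenterEdge_congr e1] at he₁
  rw [isCenterEdge_congr e2] at he₂
  have hab : a ≠ b := by rintro rfl; exact h12 rfl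
  have hsum := sum_side_lt hT (S := {a, b}) (by simpa using ⟨he₁.1, he₂.1⟩)
  rw [sum_pair hab] at hsum
  have := side_add_side hT he₁.1
  have := side_add_side hT he₂.1
  rcases Sym2.eq_iff.mp (e1.symm.trans e1') with ⟨rfl, rfl⟩ | ⟨rfl, rfl⟩
  · rw [isCenterEdge_congr e3] at he₃
    have hac : a ≠ c := by rintro rfl; exact h13 rfl
    have hbc : b ≠ c := by rintro rfl; exact h23 rfl
    have hsum3 := sum_side_lt hT (S := {a, b, c}) (by simpa using ⟨he₁.1, he₂.1, he₃.1⟩)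
    rw [sum_insert (by simp [hab, hac]), sum_pair hbc] at hsum3
    have := side_add_side hT he₃.1
    have := side_pos he₁.1.symm
    omega
  · omega

theorem isCenterEdge_and_isCenterEdge_iff (hT : G.IsTree) {u₁ v₁ u₂ v₂ : V}
    (h1 : G.Adj u₁ v₁) (h2 : G.Adj u₂ v₂) (hne : s(u₁, v₁) ≠ s(u₂, v₂)) :
    (IsCenterEdge G u₁ v₁ ∧ IsCenterEdge G u₂ v₂) ↔
      ∃ z x₁ x₂ : V, s(u₁, v₁) = s(z, x₁) ∧ s(u₂, v₂) = s(z, x₂) ∧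
        side G z x₁ = (Fintype.card V + 1) / 2 ∧ side G z x₂ = (Fintype.card V + 1) / 2 := by
  refine ⟨fun ⟨c1, c2⟩ => exists_common_endpoint_of_isCenterEdge hT c1 c2 hne, ?_⟩
  rintro ⟨z, x₁, x₂, e1, e2, s1, s2⟩
  rw [← mem_edgeSet, e1, mem_edgeSet] at h1
  rw [← mem_edgeSet, e2, mem_edgeSet] at h2
  rw [isCenterEdge_congr e1, isCenterEdge_congr e2]
  exact ⟨isCenterEdge_of_side_eq hT h1 s1, isCenterEdge_of_side_eq hT h2 s2⟩

end CenterEdge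

/-- A tree on `n` vertices has at most two center edges; moreover it has two
distinct center edges `e₁, e₂` iff they share a common endpoint `z` with
`n_z(e₁) = n_z(e₂) = ⌈n/2⌉`. -/
theorem stmt3 {V : Type*} [Fintype V] (G : SimpleGraph V) (hT : G.IsTree) :
    (Finset.univ.filter fun e : Sym2 V =>
        e ∈ G.edgeSet ∧ muE G e = Fintype.card V / 2).card ≤ 2 ∧
    ∀ u₁ v₁ u₂ v₂ : V, G.Adj u₁ v₁ → G.Adj u₂ v₂ → s(u₁, v₁) ≠ s(u₂, v₂) →
      ((IsCenterEdge G u₁ v₁ ∧ IsCenterEdge G u₂ v₂) ↔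
        ∃ z x₁ x₂ : V, s(u₁, v₁) = s(z, x₁) ∧ s(u₂, v₂) = s(z, x₂) ∧
          side G z x₁ = (Fintype.card V + 1) / 2 ∧
          side G z x₂ = (Fintype.card V + 1) / 2) :=
  ⟨card_centerEdges_le_two hT, fun _ _ _ _ h1 h2 hne =>
    isCenterEdge_and_isCenterEdge_iff hT h1 h2 hne⟩

end TreeOrder
end

section
/- Suppose the trees T and T' on n vertices are (φ,μ)-similar with respect to an edge e_1 ∈ E(T), and let e_1' = φ(e_1). Then: (1) if μ_T(e_1) < μ_{T'}(e_1') then T ≺ T'; (2) if μ_T(e_1) > μ_{T'}(e_1') then T ≻ T'; (3) if μ_T(e_1) = μ_{T'}(e_1') then r(T) = r(T'). -/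
/-! Transported to `E(T)` along `φ`, the tail sum `Σ_{i ≥ k} r_i` of either tree counts the
edges whose `μ`-value lies in `[k, ⌊n/2⌋]`, and the two `μ`-functions differ only at `e₁`.
Raising the value at `e₁` can only add `e₁` to these sets, and it does so for
`k = μ_{T'}(e₁')`, which is at most `⌊n/2⌋`. -/

namespace TreeOrder

attribute [local instance] Classical.propDecidable

variable {V : Type*} {W : Type*}

open Finset

lemma side_add_side_le [Fintype V] (G : SimpleGraph V) (u v : V) :
    side G u v + side G v u ≤ Fintype.card V := by
  rw [side, side, ← card_union_of_disjoint (disjoint_filter.mpr fun _ _ h₁ h₂ => h₂.not_gt h₁)]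
  exact card_le_univ _

lemma muE_le_half [Fintype V] (G : SimpleGraph V) (e : Sym2 V) :
    muE G e ≤ Fintype.card V / 2 := by
  induction e using Sym2.ind with
  | _ u v =>
    have := side_add_side_le G u v
    simp only [muE, Sym2.lift_mk, mu]
    omega

lemma r_eq_card_edgeSet [Fintype V] (G : SimpleGraph V) (i : ℕ) :
    r G i = #{e : G.edgeSet | muE G e = i} := by
  rw [r, ← card_map (Function.Embedding.subtype _)]
  congr 1
  ext e
  simp [and_comm]

lemma tailSum_eq_card_edgeSet [Fintype V] (G : SimpleGraph V) (n k : ℕ) :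
    tailSum G n k = #{e : G.edgeSet | muE G e ∈ Icc k (n / 2)} := by
  rw [tailSum, card_eq_sum_card_fiberwise (f := fun e : G.edgeSet => muE G e)
    (s := {e : G.edgeSet | muE G e ∈ Icc k (n / 2)}) (t := Icc k (n / 2))
    fun e he => (mem_filter.mp he).2]
  simp only [r_eq_card_edgeSet, filter_filter]
  exact sum_congr rfl fun i hi =>
    congrArg card (filter_congr fun e _ => ⟨fun h => ⟨h ▸ hi, h⟩, And.right⟩)

section Counting

variable {α : Type*} [Fintype α] {f g : α → ℕ} {a₀ : α} {m : ℕ}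

lemma filter_mem_Icc_subset (hfg : ∀ a ≠ a₀, f a = g a) (hle : f a₀ ≤ g a₀)
    (hm : g a₀ ≤ m) (k : ℕ) :
    ({a | f a ∈ Icc k m} : Finset α) ⊆ ({a | g a ∈ Icc k m} : Finset α) := by
  intro a ha
  simp only [mem_filter, mem_univ, true_and, mem_Icc] at ha ⊢
  by_cases h : a = a₀
  · subst h; omega
  · rwa [← hfg a h]

lemma card_filter_mem_Icc_lt (hfg : ∀ a ≠ a₀, f a = g a) (hlt : f a₀ < g a₀)
    (hm : g a₀ ≤ m) :
    #{a | f a ∈ Icc (g a₀) m} < #{a | g a ∈ Icc (g a₀) m} := by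
  refine card_lt_card ⟨filter_mem_Icc_subset hfg hlt.le hm _, fun hsub => ?_⟩
  have := hsub (by simpa using hm : a₀ ∈ ({a | g a ∈ Icc (g a₀) m} : Finset α))
  simp only [mem_filter, mem_univ, true_and, mem_Icc] at this
  omega

end Counting

section Similar

variable [Fintype V] [Fintype W] {G : SimpleGraph V} {H : SimpleGraph W}

lemma muE_symm_of_similar (φ : G.edgeSet ≃ H.edgeSet) {e₁ : G.edgeSet}
    (hsim : ∀ e : G.edgeSet, e ≠ e₁ → muE G e = muE H (φ e)) :
    ∀ e : H.edgeSet, e ≠ φ e₁ → muE H e = muE G (φ.symm e) := by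
  intro e he
  rw [hsim _ (by rwa [ne_eq, Equiv.symm_apply_eq]), Equiv.apply_symm_apply]

lemma prec_of_similar_of_muE_lt (hcard : Fintype.card W = Fintype.card V)
    (φ : G.edgeSet ≃ H.edgeSet) {e₁ : G.edgeSet}
    (hsim : ∀ e : G.edgeSet, e ≠ e₁ → muE G e = muE H (φ e))
    (hlt : muE G e₁ < muE H (φ e₁)) :
    Prec (Fintype.card V) G H := by
  have hm : muE H (φ e₁) ≤ Fintype.card V / 2 := hcard ▸ muE_le_half H _
  have tailSum_H : ∀ k, tailSum H (Fintype.card V) k =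
      #{e : G.edgeSet | muE H (φ e) ∈ Icc k (Fintype.card V / 2)} := fun k => by
    rw [tailSum_eq_card_edgeSet]
    exact (card_equiv φ (by simp)).symm
  refine ⟨fun k _ _ => ?_, muE H (φ e₁), by omega, hm, ?_⟩
  · rw [tailSum_eq_card_edgeSet, tailSum_H]
    exact card_le_card (filter_mem_Icc_subset hsim hlt.le hm k)
  · rw [tailSum_eq_card_edgeSet, tailSum_H]
    exact card_filter_mem_Icc_lt (f := fun e : G.edgeSet => muE G e)
      (g := fun e => muE H (φ e)) hsim hlt hm

lemma r_eq_of_muE_eq (φ : G.edgeSet ≃ H.edgeSet)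
    (h : ∀ e : G.edgeSet, muE G e = muE H (φ e)) (i : ℕ) : r G i = r H i := by
  rw [r_eq_card_edgeSet, r_eq_card_edgeSet]
  exact card_equiv φ (by simp [h])

end Similar

theorem stmt7_general {V W : Type*} [Fintype V] [Fintype W]
    (G : SimpleGraph V) (H : SimpleGraph W)
    (hcard : Fintype.card W = Fintype.card V)
    (φ : G.edgeSet ≃ H.edgeSet) (e₁ : G.edgeSet)
    (hsim : ∀ e : G.edgeSet, e ≠ e₁ → muE G (e : Sym2 V) = muE H ((φ e : Sym2 W))) :
    (muE G (e₁ : Sym2 V) < muE H ((φ e₁ : Sym2 W)) → Prec (Fintype.card V) G H) ∧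
    (muE H ((φ e₁ : Sym2 W)) < muE G (e₁ : Sym2 V) → Prec (Fintype.card V) H G) ∧
    (muE G (e₁ : Sym2 V) = muE H ((φ e₁ : Sym2 W)) →
      SameEdgeDivision (Fintype.card V) G H) := by
  refine ⟨prec_of_similar_of_muE_lt hcard φ hsim, fun hlt => ?_, fun heq i _ _ => ?_⟩
  · have := prec_of_similar_of_muE_lt hcard.symm φ.symm (muE_symm_of_similar φ hsim)
      (by simpa using hlt)
    rwa [hcard] at this
  · refine r_eq_of_muE_eq φ (fun e => ?_) i
    by_cases h : e = e₁
    · exact h ▸ heq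
    · exact hsim e h

/-- If trees `T, T'` on `n` vertices are `(φ,μ)`-similar with respect to
`e₁ ∈ E(T)` and `e₁' = φ(e₁)`, then (1) `μ_T(e₁) < μ_{T'}(e₁')` implies `T ≺ T'`;
(2) `μ_T(e₁) > μ_{T'}(e₁')` implies `T ≻ T'`; (3) `μ_T(e₁) = μ_{T'}(e₁')` implies
`r(T) = r(T')`. -/
theorem stmt7 {V W : Type*} [Fintype V] [Fintype W]
    (G : SimpleGraph V) (H : SimpleGraph W) (hG : G.IsTree) (hH : H.IsTree)
    (hcard : Fintype.card W = Fintype.card V)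
    (φ : G.edgeSet ≃ H.edgeSet) (e₁ : G.edgeSet)
    (hsim : ∀ e : G.edgeSet, e ≠ e₁ → muE G (e : Sym2 V) = muE H ((φ e : Sym2 W))) :
    (muE G (e₁ : Sym2 V) < muE H ((φ e₁ : Sym2 W)) → Prec (Fintype.card V) G H) ∧
    (muE H ((φ e₁ : Sym2 W)) < muE G (e₁ : Sym2 V) → Prec (Fintype.card V) H G) ∧
    (muE G (e₁ : Sym2 V) = muE H ((φ e₁ : Sym2 W)) →
      SameEdgeDivision (Fintype.card V) G H) :=
  stmt7_general G H hcard φ e₁ hsim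

end TreeOrder
end

section
/- Let n = n_1 + n_k + k with k ≥ 2, 1 ≤ n_1 and n_1 + 2 ≤ n_k. Then CP_{n;n_1,n_k} ≺ CP_{n;n_1+1,n_k−1}. -/
namespace TreeOrder

attribute [local instance] Classical.propDecidable

variable {V : Type*} {W : Type*}

/-!
Root `CP_{n;a,b}` at its first path vertex `a` and index each edge by its endpoint away from the
root. The `a + b` pendent edges have `μ = 1`, and the path edge entering vertex `s`
(`a < s < n - b`) cuts off the `s` vertices below `s`, so `μ = min s (n - s)`. Passing from
`CP_{n;n₁,n_k}` to `CP_{n;n₁+1,n_k-1}` keeps the pendent edges and shifts the window of path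
positions from `(n₁, n₁ + k)` to `(n₁ + 1, n₁ + k + 1)`: a path edge with `μ = n₁ + 1` is traded
for one with `μ = min (n₁ + k) n_k ≥ n₁ + 2`. So every tail sum weakly grows, and the one at
`n₁ + 2` strictly.
-/

open Finset

section EdgeCut

variable {G : SimpleGraph V} {S : Finset V} {u v : V}

def IsEdgeCut (G : SimpleGraph V) (S : Finset V) (u v : V) : Prop :=
  u ∈ S ∧ v ∉ S ∧ ∀ x y, G.Adj x y → x ∈ S → y ∉ S → x = u ∧ y = v

lemma IsEdgeCut.mem_support (h : IsEdgeCut G S u v) {w x : V} (p : G.Walk w x)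
    (hw : w ∈ S) (hx : x ∉ S) : u ∈ p.support := by
  induction p with
  | nil => exact absurd hw hx
  | @cons w m x hwm q ih =>
    by_cases hm : m ∈ S
    · exact List.mem_cons_of_mem _ (ih hm hx)
    · rw [SimpleGraph.Walk.support_cons, ← (h.2.2 w m hwm hw hm).1]
      exact List.mem_cons_self

lemma IsEdgeCut.dist_lt (h : IsEdgeCut G S u v) (hG : G.Connected) {w : V} (hw : w ∈ S) :
    G.dist w u < G.dist w v := by
  obtain ⟨p, hp⟩ := hG.exists_walk_length_eq_dist w v
  have hu : u ∈ p.support := h.mem_support p hw h.2.1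
  have hsplit := congr_arg SimpleGraph.Walk.length (p.take_spec hu)
  rw [SimpleGraph.Walk.length_append] at hsplit
  have hdrop : (p.dropUntil u hu).length ≠ 0 := fun h0 =>
    h.2.1 (SimpleGraph.Walk.eq_of_length_eq_zero h0 ▸ h.1)
  have := SimpleGraph.dist_le (p.takeUntil u hu)
  omega

lemma IsEdgeCut.compl [Fintype V] (h : IsEdgeCut G S u v) : IsEdgeCut G Sᶜ v u := by
  refine ⟨mem_compl.2 h.2.1, notMem_compl.2 h.1, fun x y hxy hx hy => ?_⟩
  rw [mem_compl] at hx
  rw [notMem_compl] at hy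
  exact (h.2.2 y x hxy.symm hy hx).symm

lemma IsEdgeCut.side_eq [Fintype V] (h : IsEdgeCut G S u v) (hG : G.Connected) :
    side G u v = #S := by
  unfold side
  congr 1
  ext w
  simp only [mem_filter, mem_univ, true_and]
  refine ⟨fun hlt => ?_, h.dist_lt hG⟩
  by_contra hw
  exact (h.compl.dist_lt hG (mem_compl.2 hw)).not_gt hlt

lemma IsEdgeCut.mu_eq [Fintype V] (h : IsEdgeCut G S u v) (hG : G.Connected) :
    mu G u v = min #S (Fintype.card V - #S) := by
  rw [mu, h.side_eq hG, h.compl.side_eq hG, card_compl]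

end EdgeCut

lemma tailSum_eq_card_filter [Fintype V] (G : SimpleGraph V) (n k : ℕ) :
    tailSum G n k = #{e : Sym2 V | e ∈ G.edgeSet ∧ muE G e ∈ Icc k (n / 2)} := by
  rw [card_eq_sum_card_fiberwise (f := muE G) (t := Icc k (n / 2))
    fun e he => (mem_filter.1 he).2.2]
  refine sum_congr rfl fun i _ => ?_
  rw [r, filter_filter]
  congr 1
  ext e
  simp only [mem_filter, mem_univ, true_and]
  constructor
  · rintro ⟨he, rfl⟩
    exact ⟨⟨he, ‹_›⟩, rfl⟩
  · rintro ⟨⟨he, -⟩, rfl⟩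
    exact ⟨he, rfl⟩

section ParentMap

variable {G : SimpleGraph V} {root : V} {parent : V → V} {depth : V → ℕ}

/-- `depth` witnesses that following `parent` always ends at `root`. -/
structure IsParentMap (G : SimpleGraph V) (root : V) (parent : V → V) (depth : V → ℕ) :
    Prop where
  adj_iff : ∀ x y, G.Adj x y ↔ (x ≠ root ∧ y = parent x) ∨ (y ≠ root ∧ x = parent y)
  depth_parent_lt : ∀ x, x ≠ root → depth (parent x) < depth x

namespace IsParentMap

variable (h : IsParentMap G root parent depth)
include h

lemma adj_parent {x : V} (hx : x ≠ root) : G.Adj x (parent x) :=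
  (h.adj_iff _ _).2 (Or.inl ⟨hx, rfl⟩)

lemma reachable_root (x : V) : G.Reachable x root := by
  induction hd : depth x using Nat.strong_induction_on generalizing x with
  | _ d ih =>
    by_cases hx : x = root
    · rw [hx]
    · exact (h.adj_parent hx).reachable.trans
        (ih _ (hd ▸ h.depth_parent_lt x hx) _ rfl)

lemma connected : G.Connected :=
  (SimpleGraph.connected_iff_exists_forall_reachable G).2
    ⟨root, fun x => (h.reachable_root x).symm⟩

lemma injOn_parentEdge : Set.InjOn (fun x => s(x, parent x)) {x | x ≠ root} := by
  intro x hx y hy hxy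
  rcases Sym2.eq_iff.1 hxy with ⟨hxy, -⟩ | ⟨hx', hy'⟩
  · exact hxy
  · have := h.depth_parent_lt x hx
    have := h.depth_parent_lt y hy
    rw [← hx', ← hy'] at *
    omega

lemma mem_edgeSet_iff {e : Sym2 V} : e ∈ G.edgeSet ↔ ∃ x ≠ root, s(x, parent x) = e := by
  induction e using Sym2.ind with
  | _ x y =>
    rw [SimpleGraph.mem_edgeSet, h.adj_iff]
    constructor
    · rintro (⟨hx, rfl⟩ | ⟨hy, rfl⟩)
      · exact ⟨x, hx, rfl⟩
      · exact ⟨y, hy, Sym2.eq_swap⟩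
    · rintro ⟨z, hz, hzxy⟩
      rcases Sym2.eq_iff.1 hzxy with ⟨rfl, rfl⟩ | ⟨rfl, rfl⟩
      · exact Or.inl ⟨hz, rfl⟩
      · exact Or.inr ⟨hz, rfl⟩

lemma card_filter_mem_edgeSet [Fintype V] (P : Sym2 V → Prop) [DecidablePred P] :
    #{e : Sym2 V | e ∈ G.edgeSet ∧ P e} = #{x ∈ univ.erase root | P s(x, parent x)} := by
  rw [← card_image_of_injOn (f := fun x => s(x, parent x))]
  · congr 1
    ext e
    simp only [mem_filter, mem_univ, true_and, mem_image, mem_erase, and_true,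
      h.mem_edgeSet_iff]
    constructor
    · rintro ⟨⟨x, hx, rfl⟩, hP⟩
      exact ⟨x, ⟨hx, hP⟩, rfl⟩
    · rintro ⟨x, ⟨hx, hP⟩, rfl⟩
      exact ⟨⟨x, hx, rfl⟩, hP⟩
  · exact h.injOn_parentEdge.mono fun x hx => (mem_erase.1 (mem_filter.1 hx).1).1

lemma tailSum_eq [Fintype V] (n k : ℕ) :
    tailSum G n k = #{x ∈ univ.erase root | mu G x (parent x) ∈ Icc k (n / 2)} := by
  rw [tailSum_eq_card_filter, h.card_filter_mem_edgeSet]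
  rfl

end IsParentMap

end ParentMap

lemma card_filter_fin_eq_card_filter_range {n : ℕ} (p : ℕ → Prop) [DecidablePred p] :
    #{x : Fin n | p x} = #{s ∈ range n | p s} := by
  rw [← Nat.Iio_eq_range, ← Fin.map_valEmbedding_univ, filter_map, card_map]
  rfl

lemma card_filter_Ioo_shift {a c : ℕ} (hac : a < c) (P : ℕ → Prop) [DecidablePred P] :
    #{s ∈ Ioo a c | P s} + (if P c then 1 else 0) =
      #{s ∈ Ioo (a + 1) (c + 1) | P s} + (if P (a + 1) then 1 else 0) := by
  have hright : insert c (Ioo a c) = Icc (a + 1) c := by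
    ext s
    simp only [mem_insert, mem_Ioo, mem_Icc]
    omega
  have hleft : insert (a + 1) (Ioo (a + 1) (c + 1)) = Icc (a + 1) c := by
    ext s
    simp only [mem_insert, mem_Ioo, mem_Icc]
    omega
  have hinsert (t : Finset ℕ) (x : ℕ) (hx : x ∉ t) :
      #{s ∈ insert x t | P s} = #{s ∈ t | P s} + if P x then 1 else 0 := by
    rw [card_filter, card_filter, sum_insert hx, add_comm]
  rw [← hinsert _ _ (by simp), hright, ← hinsert _ _ (by simp), hleft]

section DoubleStar

variable {n a b : ℕ}

def dsParent (h : a + b < n) (x : Fin n) : Fin n :=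
  if (x : ℕ) < a then ⟨a, by omega⟩
  else if (x : ℕ) < n - b then ⟨x - 1, by omega⟩
  else ⟨n - b - 1, by omega⟩

lemma val_dsParent (h : a + b < n) (x : Fin n) :
    (dsParent h x : ℕ) =
      if (x : ℕ) < a then a else if (x : ℕ) < n - b then x - 1 else n - b - 1 := by
  unfold dsParent
  split_ifs <;> rfl

lemma isParentMap_doubleStar (h : a + b < n) :
    ∃ depth, IsParentMap (doubleStar n a b) ⟨a, by omega⟩ (dsParent h) depth := by
  refine ⟨fun x => if (x : ℕ) < a then 1 else if (x : ℕ) < n - b then x - a else n - b - a,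
    fun x y => ?_, fun x hx => ?_⟩
  · simp only [doubleStar, SimpleGraph.fromRel_adj, ne_eq, Fin.ext_iff, val_dsParent]
    split_ifs <;> omega
  · simp only [ne_eq, Fin.ext_iff, val_dsParent] at hx ⊢
    split_ifs <;> omega

lemma mu_doubleStar_pendant (h : a + b < n) {x : Fin n} (hx : (x : ℕ) < a ∨ n - b ≤ x) :
    mu (doubleStar n a b) x (dsParent h x) = 1 := by
  obtain ⟨depth, hG⟩ := isParentMap_doubleStar h
  have hcut : IsEdgeCut (doubleStar n a b) {x} x (dsParent h x) := by
    refine ⟨mem_singleton_self x, ?_, fun y z hyz hy hz => ?_⟩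
    · rw [mem_singleton, Fin.ext_iff, val_dsParent]
      split_ifs <;> omega
    · rw [mem_singleton] at hy hz
      subst hy
      rw [hG.adj_iff] at hyz
      refine ⟨rfl, (hyz.resolve_right fun ⟨hz_root, hyz⟩ => ?_).2⟩
      simp only [ne_eq, Fin.ext_iff, val_dsParent] at hz_root hyz
      split_ifs at hyz <;> omega
  rw [hcut.mu_eq hG.connected, card_singleton, Fintype.card_fin]
  omega

lemma mu_doubleStar_path (h : a + b < n) {x : Fin n} (hax : a < x) (hxb : x < n - b) :
    mu (doubleStar n a b) x (dsParent h x) = min (x : ℕ) (n - x) := by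
  obtain ⟨depth, hG⟩ := isParentMap_doubleStar h
  have hcut : IsEdgeCut (doubleStar n a b) {y | y < (x : ℕ)} (dsParent h x) x := by
    refine ⟨?_, ?_, fun y z hyz hy hz => ?_⟩
    · rw [mem_filter_univ, val_dsParent]
      split_ifs <;> omega
    · simp
    · rw [mem_filter_univ] at hy
      rw [mem_filter_univ, not_lt] at hz
      rw [hG.adj_iff] at hyz
      simp only [ne_eq, Fin.ext_iff, val_dsParent] at hyz ⊢
      split_ifs at hyz ⊢ <;> omega
  rw [mu, min_comm, ← mu, hcut.mu_eq hG.connected, Fin.card_filter_val_lt, Fintype.card_fin,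
    min_eq_right x.isLt.le]

lemma tailSum_doubleStar (h : a + b < n) (k : ℕ) :
    tailSum (doubleStar n a b) n k =
      (if k ≤ 1 then a + b else 0) + #{s ∈ Ioo a (n - b) | k ≤ min s (n - s)} := by
  obtain ⟨depth, hG⟩ := isParentMap_doubleStar h
  let counted (s : ℕ) : Prop := s ≠ a ∧ if a < s ∧ s < n - b then k ≤ min s (n - s) else k ≤ 1
  have hweight : tailSum (doubleStar n a b) n k = #{x : Fin n | counted x} := by
    rw [hG.tailSum_eq]
    congr 1
    ext x
    simp only [counted, mem_filter, mem_erase, mem_univ, and_true, true_and, ne_eq, Fin.ext_iff,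
      mem_Icc]
    refine and_congr_right fun hxa => ?_
    split_ifs with hpath
    · rw [mu_doubleStar_path h hpath.1 hpath.2]
      omega
    · rw [mu_doubleStar_pendant h (by omega)]
      omega
  rw [hweight, card_filter_fin_eq_card_filter_range counted]
  split_ifs with hk
  · have hsplit : {s ∈ range n | counted s} =
        (range a ∪ Ico (n - b) n) ∪ {s ∈ Ioo a (n - b) | k ≤ min s (n - s)} := by
      ext s
      simp only [counted, mem_filter, mem_range, mem_union, mem_Ico, mem_Ioo]
      split_ifs <;> omega
    rw [hsplit, card_union_of_disjoint, card_union_of_disjoint, card_range, Nat.card_Ico]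
    · omega
    · exact disjoint_left.2 fun s hs hs' => by simp only [mem_range, mem_Ico] at hs hs'; omega
    · exact disjoint_left.2 fun s hs hs' => by
        simp only [mem_union, mem_range, mem_Ico, mem_filter, mem_Ioo] at hs hs'; omega
  · rw [zero_add]
    congr 1
    ext s
    simp only [counted, mem_filter, mem_range, mem_Ioo]
    split_ifs <;> omega

end DoubleStar

theorem stmt8_general (k n₁ nk : ℕ) (hk : 2 ≤ k) (h2 : n₁ + 2 ≤ nk) :
    Prec (n₁ + nk + k) (doubleStar (n₁ + nk + k) n₁ nk)
      (doubleStar (n₁ + nk + k) (n₁ + 1) (nk - 1)) := by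
  set n := n₁ + nk + k
  have hG := tailSum_doubleStar (n := n) (a := n₁) (b := nk) (by omega)
  have hH := tailSum_doubleStar (n := n) (a := n₁ + 1) (b := nk - 1) (by omega)
  rw [show n - nk = n₁ + k by omega] at hG
  rw [show n₁ + 1 + (nk - 1) = n₁ + nk by omega, show n - (nk - 1) = n₁ + k + 1 by omega] at hH
  have hmin_old : min (n₁ + 1) (n - (n₁ + 1)) = n₁ + 1 := by omega
  have hmin_new : n₁ + 2 ≤ min (n₁ + k) (n - (n₁ + k)) := by omega
  have hexchange (j : ℕ) :
      tailSum (doubleStar n n₁ nk) n j + (if j ≤ min (n₁ + k) (n - (n₁ + k)) then 1 else 0) =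
        tailSum (doubleStar n (n₁ + 1) (nk - 1)) n j + (if j ≤ n₁ + 1 then 1 else 0) := by
    have := card_filter_Ioo_shift (a := n₁) (c := n₁ + k) (by omega) fun s => j ≤ min s (n - s)
    rw [hmin_old] at this
    rw [hG, hH]
    omega
  refine ⟨fun j _ _ => ?_, n₁ + 2, by omega, by omega, ?_⟩
  · have := hexchange j
    split_ifs at this <;> omega
  · have := hexchange (n₁ + 2)
    split_ifs at this <;> omega

/-- Let `n = n₁ + n_k + k` with `k ≥ 2`, `1 ≤ n₁` and `n₁ + 2 ≤ n_k`. Then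
`CP_{n;n₁,n_k} ≺ CP_{n;n₁+1,n_k−1}`. -/
theorem stmt8 (k n₁ nk : ℕ) (hk : 2 ≤ k) (h1 : 1 ≤ n₁) (h2 : n₁ + 2 ≤ nk) :
    Prec (n₁ + nk + k) (doubleStar (n₁ + nk + k) n₁ nk)
      (doubleStar (n₁ + nk + k) (n₁ + 1) (nk - 1)) :=
  stmt8_general k n₁ nk hk h2

end TreeOrder
end

section
/- For every n ≥ 5 and every k with 3 ≤ k ≤ n − 1, CP_{n,k}^{⌈k/2⌉} ≺ CP_{n,k+1}^{⌈(k+1)/2⌉} (where CP_{n,n}^{⌈n/2⌉} is the path P_n); hence S_n = CP_{n,3}^2 ≺ CP_{n,4}^2 ≺ ⋯ ≺ CP_{n,n−1}^{⌈(n−1)/2⌉} ≺ P_n. -/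
/-!
Root `CP_{n,k}^s` at `v_1`: every other vertex `w` owns the edge to its parent, and this is a
bijection onto the edges. In a connected graph, if `uv` is the only edge leaving a vertex set
`S ∋ u`, then `n_u(uv) = |S|`, because a walk from `S` to `v` passes through `u` first. For
`s = ⌈k/2⌉` this gives `μ = min(w, k - w)` for the path edge `v_w v_{w+1}` and `μ = 1` for each
pendent edge, so `Σ_{i ≥ j} r_i = (s - j)⁺ + (k + 1 - s - j)⁺`, plus `n - k` when `j = 1`. At
`j = 1` both trees give `n - 1`, and for `j ≥ 2` the sum grows with `k` (by one at `j = 2`).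
-/

namespace TreeOrder

attribute [local instance] Classical.propDecidable

variable {V : Type*} {W : Type*}

open SimpleGraph Finset

section Cut

variable {G : SimpleGraph V} {u v : V}

section

variable {S : Set V}

lemma cut_compl (hcut : ∀ a b, G.Adj a b → a ∈ S → b ∉ S → a = u ∧ b = v) :
    ∀ a b, G.Adj a b → a ∈ Sᶜ → b ∉ Sᶜ → a = v ∧ b = u := by
  intro a b hab ha hb
  obtain ⟨rfl, rfl⟩ := hcut b a hab.symm (not_not.1 hb) ha
  exact ⟨rfl, rfl⟩

-- the part of `p` before it first crosses the cut
lemma exists_shorter_walk_of_cut (hcut : ∀ a b, G.Adj a b → a ∈ S → b ∉ S → a = u ∧ b = v)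
    {w x : V} (p : G.Walk w x) (hw : w ∈ S) (hx : x ∉ S) :
    ∃ q : G.Walk w u, q.length < p.length := by
  induction p with
  | nil => exact absurd hw hx
  | @cons w w' x h p ih =>
    by_cases hw' : w' ∈ S
    · obtain ⟨q, hq⟩ := ih hw' hx
      exact ⟨.cons h q, by simpa using hq⟩
    · obtain ⟨rfl, -⟩ := hcut w w' h hw hw'
      exact ⟨.nil, by simp⟩

lemma dist_lt_dist_of_cut (hG : G.Connected)
    (hcut : ∀ a b, G.Adj a b → a ∈ S → b ∉ S → a = u ∧ b = v) (hv : v ∉ S) {w : V}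
    (hw : w ∈ S) : G.dist w u < G.dist w v := by
  obtain ⟨p, hp⟩ := (hG w v).exists_walk_length_eq_dist
  obtain ⟨q, hq⟩ := exists_shorter_walk_of_cut hcut p hw hv
  exact hp ▸ (dist_le q).trans_lt hq

end

variable [Fintype V]

lemma side_eq_card_of_cut (hG : G.Connected) {S : Finset V} (hu : u ∈ S) (hv : v ∉ S)
    (hcut : ∀ a b, G.Adj a b → a ∈ S → b ∉ S → a = u ∧ b = v) :
    side G u v = #S := by
  unfold side
  congr 1
  ext w
  simp only [mem_filter, mem_univ, true_and]
  refine ⟨fun h => ?_, dist_lt_dist_of_cut hG hcut hv⟩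
  by_contra hw
  exact (dist_lt_dist_of_cut hG (cut_compl hcut) (not_not.2 hu) hw).not_gt h

lemma mu_eq_of_cut (hG : G.Connected) {S : Finset V} (hu : u ∈ S) (hv : v ∉ S)
    (hcut : ∀ a b, G.Adj a b → a ∈ S → b ∉ S → a = u ∧ b = v) :
    mu G u v = min #S (Fintype.card V - #S) := by
  have hcut' : ∀ a b, G.Adj a b → a ∈ Sᶜ → b ∉ Sᶜ → a = v ∧ b = u := by
    simpa using cut_compl (S := (S : Set V)) hcut
  rw [mu, side_eq_card_of_cut hG hu hv hcut,
    side_eq_card_of_cut hG (mem_compl.2 hv) (by simpa using hu) hcut', card_compl]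

end Cut

section EdgeDivision

variable [Fintype V] (G : SimpleGraph V)

lemma side_add_side_le_card (u v : V) : side G u v + side G v u ≤ Fintype.card V := by
  unfold side
  rw [← card_union_of_disjoint (disjoint_filter.2 fun _ _ h => h.not_gt)]
  exact card_le_univ _

lemma muE_le_card_div_two (e : Sym2 V) : muE G e ≤ Fintype.card V / 2 := by
  induction e using Sym2.ind with
  | _ u v =>
    have := side_add_side_le_card G u v
    simp only [muE, Sym2.lift_mk, mu]
    omega

lemma tailSum_card_eq_card_filter (j : ℕ) :
    tailSum G (Fintype.card V) j = #{e ∈ G.edgeFinset | j ≤ muE G e} := by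
  rw [card_eq_sum_card_fiberwise (f := muE G) (t := Icc j (Fintype.card V / 2))
    fun e he => mem_Icc.2 ⟨(mem_filter.1 he).2, muE_le_card_div_two G e⟩]
  refine sum_congr rfl fun i hi => ?_
  unfold r
  congr 1
  ext e
  simp only [mem_filter, mem_univ, true_and, mem_edgeFinset]
  constructor
  · rintro ⟨he, rfl⟩
    exact ⟨⟨he, (mem_Icc.1 hi).1⟩, rfl⟩
  · rintro ⟨⟨he, -⟩, rfl⟩
    exact ⟨he, rfl⟩

end EdgeDivision

section ParentMap

variable [LinearOrder V] {G : SimpleGraph V} {r : V} {par : V → V}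

lemma connected_of_parent [WellFoundedLT V] (hlt : ∀ w ≠ r, par w < w)
    (hadj : ∀ w ≠ r, G.Adj (par w) w) : G.Connected := by
  have reach : ∀ w, G.Reachable r w := by
    intro w
    induction w using WellFoundedLT.induction with
    | _ w ih =>
      by_cases hw : w = r
      · exact hw ▸ .rfl
      · exact (ih _ (hlt w hw)).trans (hadj w hw).reachable
  exact (connected_iff G).2 ⟨fun x y => (reach x).symm.trans (reach y), ⟨r⟩⟩

/-- In a tree given by a parent map, `w ↦ s(par w, w)` is a bijection from the non-root
vertices onto the edges. -/
lemma card_filter_edgeFinset_eq_of_parent [Fintype V] [Fintype G.edgeSet]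
    (hlt : ∀ w ≠ r, par w < w)
    (hadj : ∀ x y, G.Adj x y ↔ (y ≠ r ∧ x = par y) ∨ (x ≠ r ∧ y = par x))
    (P : Sym2 V → Prop) [DecidablePred P] :
    #{e ∈ G.edgeFinset | P e} = #{w | w ≠ r ∧ P s(par w, w)} := by
  have hinj : Set.InjOn (fun w => s(par w, w)) {w | w ≠ r ∧ P s(par w, w)} := by
    intro w hw w' hw' h
    rcases Sym2.eq_iff.1 h with ⟨-, h⟩ | ⟨h1, h2⟩
    · exact h
    · -- otherwise `w' = par w < w = par w' < w'`
      have := hlt w hw.1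
      have := hlt w' hw'.1
      grind
  symm
  rw [← card_image_of_injOn (f := fun w => s(par w, w)) (by simpa using hinj)]
  congr 1
  ext e
  induction e using Sym2.ind with
  | _ x y =>
    simp only [mem_filter, mem_edgeFinset, mem_edgeSet, hadj, mem_image, mem_univ, true_and]
    constructor
    · rintro ⟨w, ⟨hw, hP⟩, h⟩
      rcases Sym2.eq_iff.1 h with ⟨rfl, rfl⟩ | ⟨rfl, rfl⟩
      · exact ⟨.inl ⟨hw, rfl⟩, hP⟩
      · exact ⟨.inr ⟨hw, rfl⟩, Sym2.eq_swap ▸ hP⟩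
    · rintro ⟨(⟨hy, rfl⟩ | ⟨hx, rfl⟩), hP⟩
      · exact ⟨y, ⟨hy, hP⟩, rfl⟩
      · exact ⟨x, ⟨hx, Sym2.eq_swap ▸ hP⟩, Sym2.eq_swap⟩

end ParentMap

lemma card_filter_fin_val {n : ℕ} (p : ℕ → Prop) [DecidablePred p] :
    #{i : Fin n | p i} = #{m ∈ range n | p m} := by
  simp only [← card_map Fin.valEmbedding, map_filter', Fin.map_valEmbedding_univ,
    ← Nat.Iio_eq_range]
  refine congrArg card (filter_congr fun m hm => ?_)
  simp [Fin.exists_iff, mem_Iio.1 hm]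

/-- `μ` of the edge from vertex `w > 0` of `CP_{n,k}^s` to its parent. -/
def cpMu (k s w : ℕ) : ℕ :=
  if w < k then (if w < s then w else k - w) else 1

lemma card_filter_cpMu {n k s j : ℕ} (hs : 0 < s) (hsk : s ≤ k) (hkn : k ≤ n) (hj : 1 ≤ j) :
    #{m ∈ range n | m ≠ 0 ∧ j ≤ cpMu k s m} =
      (s - j) + (k + 1 - s - j) + if j = 1 then n - k else 0 := by
  have hfilter : {m ∈ range n | m ≠ 0 ∧ j ≤ cpMu k s m} =
      (Ico j s ∪ Ico s (k + 1 - j)) ∪ Ico k (if j = 1 then n else k) := by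
    ext m
    rw [mem_filter, mem_range, cpMu]
    simp only [mem_union, mem_Ico]
    split_ifs <;> omega
  have hdisj : ∀ a b c d : ℕ, b ≤ c → Disjoint (Ico a b) (Ico c d) := fun a b c d h =>
    disjoint_left.2 fun m h1 h2 => by simp only [mem_Ico] at h1 h2; omega
  rw [hfilter, card_union_of_disjoint (disjoint_union_left.2 ⟨hdisj _ _ _ _ (by omega),
    hdisj _ _ _ _ (by omega)⟩), card_union_of_disjoint (hdisj _ _ _ _ le_rfl)]
  simp only [Nat.card_Ico]
  split_ifs <;> omega

section Caterpillar

variable {n k s : ℕ}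

lemma cpOne_adj {x y : Fin n} :
    (cpOne n k s).Adj x y ↔ x ≠ y ∧
      (((x : ℕ) + 1 = y ∧ (y : ℕ) < k) ∨ ((x : ℕ) = s - 1 ∧ k ≤ (y : ℕ)) ∨
       ((y : ℕ) + 1 = x ∧ (x : ℕ) < k) ∨ ((y : ℕ) = s - 1 ∧ k ≤ (x : ℕ))) := by
  simp only [cpOne, fromRel_adj, or_assoc]

def cpParent (k : ℕ) (hsn : s ≤ n) (w : Fin n) : Fin n :=
  if (w : ℕ) < k then ⟨w - 1, by omega⟩ else ⟨s - 1, by have := w.isLt; omega⟩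

variable (hs : 0 < s) (hsk : s ≤ k) (hkn : k ≤ n)
include hs hsk hkn

lemma cpParent_lt {w : Fin n} (hw : w ≠ ⟨0, by omega⟩) : cpParent k (hsk.trans hkn) w < w := by
  rw [Ne, Fin.ext_iff] at hw
  rw [Fin.lt_def, cpParent]
  split_ifs <;> simp only at hw ⊢ <;> omega

lemma cpOne_adj_iff_parent (x y : Fin n) :
    (cpOne n k s).Adj x y ↔
      (y ≠ ⟨0, by omega⟩ ∧ x = cpParent k (hsk.trans hkn) y) ∨
        (x ≠ ⟨0, by omega⟩ ∧ y = cpParent k (hsk.trans hkn) x) := by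
  rw [cpOne_adj]
  simp only [cpParent, ne_eq, Fin.ext_iff]
  split_ifs <;> simp only <;> omega

lemma cpOne_connected : (cpOne n k s).Connected :=
  connected_of_parent (fun _ => cpParent_lt hs hsk hkn) fun w hw =>
    (cpOne_adj_iff_parent hs hsk hkn _ w).2 (.inl ⟨hw, rfl⟩)

lemma mu_cpOne_path_of_lt {w : ℕ} (hw0 : 0 < w) (hws : w < s) (hleft : 2 * (s - 1) ≤ n) :
    mu (cpOne n k s) ⟨w - 1, by omega⟩ ⟨w, by omega⟩ = w := by
  rw [mu_eq_of_cut (S := {x | (x : ℕ) < w}) (cpOne_connected hs hsk hkn)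
    (by simp only [mem_filter, mem_univ, true_and]; omega) (by simp only [mem_filter, mem_univ, true_and]; omega)]
  · rw [Fin.card_filter_val_lt, Fintype.card_fin]
    omega
  · intro a b hab ha hb
    simp only [mem_filter, mem_univ, true_and, not_lt] at ha hb
    rw [cpOne_adj] at hab
    simp only [Fin.ext_iff]
    omega

lemma mu_cpOne_path_of_le {w : ℕ} (hsw : s ≤ w) (hwk : w < k) (hright : 2 * (k - s) ≤ n) :
    mu (cpOne n k s) ⟨w - 1, by omega⟩ ⟨w, by omega⟩ = k - w := by
  rw [mu, min_comm, ← mu, mu_eq_of_cut (S := {x | w ≤ (x : ℕ) ∧ (x : ℕ) < k})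
    (cpOne_connected hs hsk hkn)
    (by simp only [mem_filter, mem_univ, true_and]; omega) (by simp only [mem_filter, mem_univ, true_and]; omega)]
  · have hcard : #{x : Fin n | w ≤ (x : ℕ) ∧ (x : ℕ) < k} = k - w := by
      rw [card_filter_fin_val (fun m => w ≤ m ∧ m < k), ← Nat.card_Ico w k]
      congr 1
      ext m
      simp only [mem_filter, mem_range, mem_Ico]
      omega
    rw [hcard, Fintype.card_fin]
    omega
  · intro a b hab ha hb
    simp only [mem_filter, mem_univ, true_and, not_and, not_lt] at ha hb
    rw [cpOne_adj] at hab
    simp only [Fin.ext_iff]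
    omega

lemma mu_cpOne_pendent {j : ℕ} (hkj : k ≤ j) (hjn : j < n) :
    mu (cpOne n k s) ⟨s - 1, by omega⟩ ⟨j, hjn⟩ = 1 := by
  rw [mu, min_comm, ← mu, mu_eq_of_cut (S := {⟨j, hjn⟩}) (cpOne_connected hs hsk hkn)
    (mem_singleton_self _) (by simp only [mem_singleton, Fin.mk.injEq]; omega)]
  · rw [card_singleton, Fintype.card_fin]
    omega
  · intro a b hab ha hb
    rw [mem_singleton] at ha hb
    subst ha
    rw [cpOne_adj] at hab
    simp only [Fin.ext_iff] at hab hb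
    exact ⟨rfl, Fin.ext (show (b : ℕ) = s - 1 by omega)⟩

variable (hleft : 2 * (s - 1) ≤ n) (hright : 2 * (k - s) ≤ n)
include hleft hright

lemma muE_cpOne_parent {w : Fin n} (hw : (w : ℕ) ≠ 0) :
    muE (cpOne n k s) s(cpParent k (hsk.trans hkn) w, w) = cpMu k s w := by
  obtain ⟨w, hwn⟩ := w
  simp only at hw
  simp only [muE, Sym2.lift_mk, cpParent, cpMu]
  split_ifs with hwk hws
  · exact mu_cpOne_path_of_lt hs hsk hkn (by omega) hws hleft
  · exact mu_cpOne_path_of_le hs hsk hkn (by omega) hwk hright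
  · exact mu_cpOne_pendent hs hsk hkn (by omega) hwn

lemma tailSum_cpOne {j : ℕ} (hj : 1 ≤ j) :
    tailSum (cpOne n k s) n j = (s - j) + (k + 1 - s - j) + if j = 1 then n - k else 0 := by
  have h := tailSum_card_eq_card_filter (cpOne n k s) j
  rw [Fintype.card_fin] at h
  rw [h, card_filter_edgeFinset_eq_of_parent (fun _ => cpParent_lt hs hsk hkn)
    (cpOne_adj_iff_parent hs hsk hkn)]
  rw [← card_filter_cpMu hs hsk hkn hj, ← card_filter_fin_val (fun m => m ≠ 0 ∧ j ≤ cpMu k s m)]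
  congr 1
  ext w
  simp only [mem_filter, mem_univ, true_and, ne_eq, Fin.ext_iff]
  exact and_congr_right fun hw => by rw [muE_cpOne_parent hs hsk hkn hleft hright hw]

end Caterpillar

lemma prec_cpOne_succ {n k : ℕ} (hk : 3 ≤ k) (hkn : k < n) :
    Prec n (cpOne n k ((k + 1) / 2)) (cpOne n (k + 1) ((k + 2) / 2)) := by
  have tail_k {j : ℕ} (hj : 1 ≤ j) := tailSum_cpOne (n := n) (k := k) (s := (k + 1) / 2)
    (by omega) (by omega) (by omega) (by omega) (by omega) hj
  have tail_succ {j : ℕ} (hj : 1 ≤ j) := tailSum_cpOne (n := n) (k := k + 1) (s := (k + 2) / 2)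
    (by omega) (by omega) (by omega) (by omega) (by omega) hj
  refine ⟨fun j hj _ => ?_, 2, by norm_num, by omega, ?_⟩
  · rw [tail_k hj, tail_succ hj]
    split_ifs <;> omega
  · rw [tail_k (by norm_num), tail_succ (by norm_num)]
    split_ifs <;> omega

lemma cpOne_self_eq_pathG (n s : ℕ) : cpOne n n s = pathG n := by
  ext x y
  simp only [cpOne, pathG, fromRel_adj]
  omega

/-- Swapping `0` and `1` moves the centre of `S_n` to `v_2`. -/
def starIsoCpOne {n : ℕ} (hn : 2 ≤ n) : starG n ≃g cpOne n 3 2 where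
  toEquiv := Equiv.swap ⟨0, by omega⟩ ⟨1, by omega⟩
  map_rel_iff' {a b} := by
    simp only [starG, cpOne, fromRel_adj, Equiv.swap_apply_def, ne_eq, Fin.ext_iff]
    split_ifs <;> grind

/-- For every `n ≥ 5` and every `k` with `3 ≤ k ≤ n − 1`,
`CP_{n,k}^{⌈k/2⌉} ≺ CP_{n,k+1}^{⌈(k+1)/2⌉}` (where `CP_{n,n}^{⌈n/2⌉}` is the path `P_n`);
hence `S_n = CP_{n,3}^2 ≺ CP_{n,4}^2 ≺ ⋯ ≺ CP_{n,n−1}^{⌈(n−1)/2⌉} ≺ P_n`. -/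
theorem stmt14 (n : ℕ) (hn : 5 ≤ n) :
    (∀ k, 3 ≤ k → k ≤ n - 1 →
        Prec n (cpOne n k ((k + 1) / 2)) (cpOne n (k + 1) ((k + 2) / 2))) ∧
    Nonempty (starG n ≃g cpOne n 3 2) ∧
    Nonempty (cpOne n n ((n + 1) / 2) ≃g pathG n) :=
  ⟨fun _ hk hkn => prec_cpOne_succ hk (by omega), ⟨starIsoCpOne (by omega)⟩,
    ⟨cpOne_self_eq_pathG n _ ▸ Iso.refl⟩⟩

end TreeOrder
end
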